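/- arXiv:1702.06080 — 2 statements merged into one kernel-verified Lean document; each statement's English description precedes it below -/
import Mathlib

section
/- Any two continuous free actions of the circle group S¹ on S¹ are equivalent; that is, if μ₁ and μ₂ are continuous free actions of S¹ on S¹, then there exists a homeomorphism Ψ : S¹ → S¹ such that Ψ(μ₁(g, x)) = μ₂(g, Ψ(x)) for all g ∈ S¹ and x ∈ S¹. In particular, every continuous free action of S¹ on itself is equivalent to the action by complex multiplication. -/
/-!
The orbit map `g ↦ μ g x₀` of a free action is injective and intertwines `μ` with left
multiplication, so everything reduces to showing that a continuous injective self-map of the circle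
is onto; by compactness it is then a homeomorphism. If such a map missed a point `p`, composing it
with the argument measured from `p` would give a continuous injective map from the circle to `ℝ`.
There is none: for continuous `f : S¹ → ℝ`, the function `z ↦ f (-z) - f z` changes sign under
`z ↦ -z`, so it vanishes somewhere.
-/

open Complex Function

lemma exists_apply_involution_eq_apply {X α : Type*} [TopologicalSpace X] [PreconnectedSpace X]
    [LinearOrder α] [TopologicalSpace α] [OrderClosedTopology α] {σ : X → X}
    (hσ : Involutive σ) (hσc : Continuous σ) {f : X → α} (hf : Continuous f) (x₀ : X) :
    ∃ x, f (σ x) = f x := by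
  rcases le_total (f (σ x₀)) (f x₀) with h | h
  · exact intermediate_value_univ₂ (b := σ x₀) (hf.comp hσc) hf h (by rwa [hσ x₀])
  · obtain ⟨x, hx⟩ := intermediate_value_univ₂ (b := σ x₀) hf (hf.comp hσc) h
      (by rwa [comp_apply, hσ x₀])
    exact ⟨x, hx.symm⟩

namespace Circle

lemma not_injective_of_continuous {f : Circle → ℝ} (hf : Continuous f) : ¬ Injective f :=
  fun hinj ↦
    let ⟨z, hz⟩ := exists_apply_involution_eq_apply neg_involutive continuous_neg hf 1
    neg_ne_self z (hinj hz)

lemma continuousAt_arg {w : Circle} (hw : w ≠ -1) : ContinuousAt (fun z : Circle ↦ arg z) w := by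
  refine (Complex.continuousAt_arg ?_).comp continuous_subtype_val.continuousAt
  have hw' : (w : ℂ) ≠ -1 := fun h ↦ hw (Subtype.ext (by simpa using h))
  rw [← Set.singleton_subset_iff,
    subset_slitPlane_iff_of_subset_sphere (r := 1) (by simp [norm_coe])]
  simpa [eq_comm] using hw'

lemma surjective_of_continuous_of_injective {f : Circle → Circle} (hf : Continuous f)
    (hinj : Injective f) : Surjective f := by
  intro p
  by_contra! hp
  refine not_injective_of_continuous (f := fun z ↦ arg (-(f z / p) : Circle)) ?_ ?_
  · refine continuous_iff_continuousAt.2 fun z ↦ (continuousAt_arg ?_).comp (by fun_prop)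
    simpa [div_eq_one] using hp z
  · exact injective_arg.comp (neg_injective.comp (div_left_injective.comp hinj))

end Circle

section OrbitMap

variable {G X : Type*} [Group G] {μ : G → X → X}

lemma injective_orbitMap_of_free (hone : ∀ x, μ 1 x = x)
    (hmul : ∀ g h x, μ (g * h) x = μ g (μ h x)) (hfree : ∀ g x, μ g x = x → g = 1) (x₀ : X) :
    Injective fun g ↦ μ g x₀ := by
  intro g h hgh
  have hfix : μ (h⁻¹ * g) x₀ = x₀ := by
    simp only at hgh
    rw [hmul, hgh, ← hmul, inv_mul_cancel, hone]
  exact (inv_mul_eq_one.1 (hfree _ _ hfix)).symm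

lemma exists_homeomorph_conj_mul_of_bijective [TopologicalSpace G] [CompactSpace G]
    [TopologicalSpace X] [T2Space X] (hmul : ∀ g h x, μ (g * h) x = μ g (μ h x)) {x₀ : X}
    (hcont : Continuous fun g ↦ μ g x₀) (hbij : Bijective fun g ↦ μ g x₀) :
    ∃ Ψ : X ≃ₜ G, ∀ g x, Ψ (μ g x) = g * Ψ x := by
  let E : G ≃ₜ X := (show Continuous (Equiv.ofBijective _ hbij) from hcont).homeoOfEquivCompactToT2
  have hE : ∀ g, E g = μ g x₀ := fun _ ↦ rfl
  refine ⟨E.symm, fun g x ↦ E.injective ?_⟩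
  rw [E.apply_symm_apply, hE, hmul, ← hE, E.apply_symm_apply]

end OrbitMap

lemma Circle.exists_homeomorph_conj_mul_of_free (μ : Circle → Circle → Circle)
    (hone : ∀ x, μ 1 x = x) (hmul : ∀ g h x, μ (g * h) x = μ g (μ h x))
    (hcont : Continuous fun p : Circle × Circle ↦ μ p.1 p.2) (hfree : ∀ g x, μ g x = x → g = 1) :
    ∃ Ψ : Circle ≃ₜ Circle, ∀ g x, Ψ (μ g x) = g * Ψ x := by
  have horbit : Continuous fun g ↦ μ g 1 := hcont.comp (.prodMk_left 1)
  have hinj := injective_orbitMap_of_free hone hmul hfree 1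
  exact exists_homeomorph_conj_mul_of_bijective hmul horbit
    ⟨hinj, surjective_of_continuous_of_injective horbit hinj⟩

/-- Any two continuous free actions of the circle group `S¹` on `S¹` are equivalent,
and in particular each is equivalent to the action by (complex) multiplication. -/
theorem stmt0
    (μ₁ μ₂ : Circle → Circle → Circle)
    (h₁one : ∀ x, μ₁ 1 x = x)
    (h₁mul : ∀ g h x, μ₁ (g * h) x = μ₁ g (μ₁ h x))
    (h₁cont : Continuous fun p : Circle × Circle => μ₁ p.1 p.2)
    (h₁free : ∀ g x, μ₁ g x = x → g = 1)
    (h₂one : ∀ x, μ₂ 1 x = x)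
    (h₂mul : ∀ g h x, μ₂ (g * h) x = μ₂ g (μ₂ h x))
    (h₂cont : Continuous fun p : Circle × Circle => μ₂ p.1 p.2)
    (h₂free : ∀ g x, μ₂ g x = x → g = 1) :
    (∃ Ψ : Circle ≃ₜ Circle, ∀ g x, Ψ (μ₁ g x) = μ₂ g (Ψ x)) ∧
    (∃ Ψ : Circle ≃ₜ Circle, ∀ g x, Ψ (μ₁ g x) = g * Ψ x) := by
  obtain ⟨Ψ₁, hΨ₁⟩ := Circle.exists_homeomorph_conj_mul_of_free μ₁ h₁one h₁mul h₁cont h₁free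
  obtain ⟨Ψ₂, hΨ₂⟩ := Circle.exists_homeomorph_conj_mul_of_free μ₂ h₂one h₂mul h₂cont h₂free
  refine ⟨⟨Ψ₁.trans Ψ₂.symm, fun g x ↦ Ψ₂.injective ?_⟩, ⟨Ψ₁, hΨ₁⟩⟩
  simp only [Homeomorph.trans_apply, Homeomorph.apply_symm_apply, hΨ₁, hΨ₂]
end

section
/- For coprime integers μ, ν with 0 < ν < μ, the orbit space of the S¹-action z·(w, u) = (z^ν w, z^μ u) on D² × S¹ is homeomorphic to the closed 2-disk D². -/
/-!
The map `(w, u) ↦ w ^ μ * u⁻¹ ^ ν` from `D² × S¹` onto `D²` is continuous, surjective (take a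
`μ`-th root) and constant on orbits. Conversely, if two points have the same image, then
`w' = c * w` for some `c ∈ S¹` with `c ^ μ = s ^ ν`, where `s = u' / u`; since `μ` and `ν` are
coprime, Bézout gives `z ∈ S¹` with `z ^ μ = s` and `z ^ ν = c`, so the points lie in one orbit.
A continuous bijection from the compact orbit space onto the Hausdorff disk is a homeomorphism.
-/

local notation "𝔻" => Metric.closedBall (0 : ℂ) 1

noncomputable def Quot.homeomorphOfFibers {X Y : Type*} [TopologicalSpace X] [CompactSpace X]
    [TopologicalSpace Y] [T2Space Y] {r : X → X → Prop} {f : X → Y} (hf : Continuous f)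
    (hsurj : Function.Surjective f) (hr : ∀ x y, r x y ↔ f x = f y) : Quot r ≃ₜ Y :=
  have hlift : ∀ x y, r x y → f x = f y := fun x y ↦ (hr x y).1
  have hinj : Function.Injective (Quot.lift f hlift) := by
    rintro ⟨x⟩ ⟨y⟩ h
    exact Quot.sound ((hr x y).2 h)
  Continuous.homeoOfEquivCompactToT2
    (f := .ofBijective _ ⟨hinj, (Quot.surjective_lift hlift).2 hsurj⟩)
    (continuous_quot_lift hlift hf)

theorem exists_pow_eq_and_pow_eq_of_coprime {G : Type*} [CommGroup G] {m n : ℕ}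
    (hmn : m.Coprime n) {c s : G} (h : c ^ m = s ^ n) : ∃ z : G, z ^ m = s ∧ z ^ n = c := by
  obtain ⟨a, b, hab⟩ := Nat.isCoprime_iff_coprime.2 hmn
  have h' : c ^ (m : ℤ) = s ^ (n : ℤ) := by exact_mod_cast h
  refine ⟨s ^ a * c ^ b, ?_, ?_⟩
  · calc (s ^ a * c ^ b) ^ m = s ^ (a * m) * (c ^ (m : ℤ)) ^ b := by
          rw [← zpow_natCast, mul_zpow, ← zpow_mul, ← zpow_mul, ← zpow_mul, mul_comm (m : ℤ) b]
      _ = s := by rw [h', ← zpow_mul, ← zpow_add, mul_comm (n : ℤ), hab, zpow_one]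
  · calc (s ^ a * c ^ b) ^ n = (s ^ (n : ℤ)) ^ a * c ^ (b * n) := by
          rw [← zpow_natCast, mul_zpow, ← zpow_mul, ← zpow_mul, ← zpow_mul, mul_comm (n : ℤ) a]
      _ = c := by rw [← h', ← zpow_mul, ← zpow_add, mul_comm (m : ℤ), hab, zpow_one]

theorem Circle.exists_pow_eq {n : ℕ} (hn : n ≠ 0) (s : Circle) : ∃ z : Circle, z ^ n = s := by
  obtain ⟨θ, rfl⟩ := Circle.exp_surjective s
  refine ⟨Circle.exp (θ / n), ?_⟩
  rw [← Circle.exp_natCast_mul, mul_div_cancel₀ _ (Nat.cast_ne_zero.2 hn)]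

theorem Circle.exists_mul_eq_of_pow_eq {n : ℕ} (hn : n ≠ 0) {w w' : ℂ} {t : Circle}
    (h : w' ^ n = w ^ n * t) : ∃ c : Circle, c ^ n = t ∧ c * w = w' := by
  by_cases hw : w = 0
  · obtain ⟨c, hc⟩ := Circle.exists_pow_eq hn t
    refine ⟨c, hc, ?_⟩
    rw [hw, zero_pow hn, zero_mul, pow_eq_zero_iff hn] at h
    rw [hw, h, mul_zero]
  · have hnorm : ‖w' / w‖ = 1 := by
      have : ‖w'‖ ^ n = ‖w‖ ^ n := by simpa [norm_pow, Circle.norm_coe] using congrArg norm h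
      rw [norm_div, (pow_left_inj₀ (norm_nonneg _) (norm_nonneg _) hn).1 this,
        div_self (norm_ne_zero_iff.2 hw)]
    let c : Circle := ⟨w' / w, mem_sphere_zero_iff_norm.2 hnorm⟩
    refine ⟨c, Circle.coe_injective ?_, div_mul_cancel₀ _ hw⟩
    rw [Circle.coe_pow]
    change (w' / w) ^ n = t
    rw [div_pow, h]
    field_simp

noncomputable section

namespace SolidTorus

def circleToDisk : Circle →* 𝔻 where
  toFun z := ⟨z, Metric.sphere_subset_closedBall z.2⟩
  map_one' := rfl
  map_mul' _ _ := rfl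

@[simp]
theorem coe_circleToDisk (z : Circle) : (circleToDisk z : ℂ) = z := rfl

theorem continuous_circleToDisk : Continuous circleToDisk :=
  continuous_subtype_val.subtype_mk _

variable (μ ν : ℕ)

def act (z : Circle) (p : 𝔻 × Circle) : 𝔻 × Circle :=
  (circleToDisk (z ^ ν) * p.1, z ^ μ * p.2)

def orbitMap (p : 𝔻 × Circle) : 𝔻 :=
  p.1 ^ μ * circleToDisk (p.2⁻¹ ^ ν)

theorem continuous_orbitMap : Continuous (orbitMap μ ν) :=
  (continuous_fst.pow μ).mul (continuous_circleToDisk.comp (continuous_snd.inv.pow ν))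

theorem orbitMap_act (z : Circle) (p : 𝔻 × Circle) :
    orbitMap μ ν (act μ ν z p) = orbitMap μ ν p := by
  have hphase : (z ^ ν) ^ μ * (z ^ μ * p.2)⁻¹ ^ ν = p.2⁻¹ ^ ν := by
    rw [mul_inv, mul_pow, ← pow_mul, inv_pow, ← pow_mul, mul_comm ν μ, mul_inv_cancel_left]
  calc (circleToDisk (z ^ ν) * p.1) ^ μ * circleToDisk ((z ^ μ * p.2)⁻¹ ^ ν)
      = p.1 ^ μ * circleToDisk ((z ^ ν) ^ μ * (z ^ μ * p.2)⁻¹ ^ ν) := by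
        rw [map_mul, mul_pow, mul_comm (_ ^ μ), mul_assoc, ← map_pow]
    _ = p.1 ^ μ * circleToDisk (p.2⁻¹ ^ ν) := by rw [hphase]

variable {μ ν}

theorem orbitMap_surjective (hμ : μ ≠ 0) : Function.Surjective (orbitMap μ ν) := by
  intro d
  obtain ⟨w, hw⟩ := IsAlgClosed.exists_pow_nat_eq (d : ℂ) (Nat.pos_of_ne_zero hμ)
  have hw_mem : w ∈ 𝔻 := by
    have hd := mem_closedBall_zero_iff.1 d.2
    rw [← hw, norm_pow] at hd
    exact mem_closedBall_zero_iff.2 ((pow_le_one_iff_of_nonneg (norm_nonneg w) hμ).1 hd)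
  refine ⟨(⟨w, hw_mem⟩, 1), Subtype.ext ?_⟩
  simp [orbitMap, hw]

theorem exists_act_eq_of_orbitMap_eq (hμ : μ ≠ 0) (hco : μ.Coprime ν) {p q : 𝔻 × Circle}
    (h : orbitMap μ ν p = orbitMap μ ν q) : ∃ z : Circle, act μ ν z p = q := by
  have hpow : (q.1 : ℂ) ^ μ = (p.1 : ℂ) ^ μ * ((p.2⁻¹ ^ ν / q.2⁻¹ ^ ν : Circle) : ℂ) := by
    rw [Circle.coe_div, ← mul_div_assoc]
    refine eq_div_of_mul_eq (Circle.coe_ne_zero _) ?_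
    simpa [orbitMap] using congrArg Subtype.val h.symm
  obtain ⟨c, hcμ, hcw⟩ := Circle.exists_mul_eq_of_pow_eq hμ hpow
  rw [← div_pow, inv_div_inv] at hcμ
  obtain ⟨z, hzμ, hzν⟩ := exists_pow_eq_and_pow_eq_of_coprime hco hcμ
  refine ⟨z, Prod.ext (Subtype.ext ?_) ?_⟩
  · simpa [act, hzν] using hcw
  · simp [act, hzμ]

theorem exists_act_eq_iff_orbitMap_eq (hμ : μ ≠ 0) (hco : μ.Coprime ν) (p q : 𝔻 × Circle) :
    (∃ z : Circle, act μ ν z p = q) ↔ orbitMap μ ν p = orbitMap μ ν q :=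
  ⟨fun ⟨z, hz⟩ ↦ hz ▸ (orbitMap_act μ ν z p).symm, exists_act_eq_of_orbitMap_eq hμ hco⟩

end SolidTorus

end

theorem stmt10_general (μ ν : ℕ) (hνμ : ν < μ) (hco : Nat.Coprime μ ν) :
    ∃ act : Circle → (Metric.closedBall (0:ℂ) 1) × Circle →
        (Metric.closedBall (0:ℂ) 1) × Circle,
      (∀ (z : Circle) (w : Metric.closedBall (0:ℂ) 1) (u : Circle),
        ((act z (w, u)).1 : ℂ) = ((z ^ ν : Circle) : ℂ) * (w : ℂ) ∧
        (act z (w, u)).2 = z ^ μ * u) ∧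
      Nonempty (Quot (fun p q => ∃ z : Circle, act z p = q) ≃ₜ
        (Metric.closedBall (0:ℂ) 1)) := by
  have hμ : μ ≠ 0 := by omega
  exact ⟨SolidTorus.act μ ν, fun _ _ _ ↦ ⟨rfl, rfl⟩,
    ⟨Quot.homeomorphOfFibers (SolidTorus.continuous_orbitMap μ ν)
      (SolidTorus.orbitMap_surjective hμ) (SolidTorus.exists_act_eq_iff_orbitMap_eq hμ hco)⟩⟩

/-- For coprime `μ, ν` with `0 < ν < μ`, the orbit space of the `S¹`-action
`z·(w, u) = (zᶮw, zᵘu)` on the solid torus `D² × S¹` is homeomorphic to the closed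
`2`-disk `D²`. -/
theorem stmt10 (μ ν : ℕ) (hν : 0 < ν) (hνμ : ν < μ) (hco : Nat.Coprime μ ν) :
    ∃ act : Circle → (Metric.closedBall (0:ℂ) 1) × Circle →
        (Metric.closedBall (0:ℂ) 1) × Circle,
      (∀ (z : Circle) (w : Metric.closedBall (0:ℂ) 1) (u : Circle),
        ((act z (w, u)).1 : ℂ) = ((z ^ ν : Circle) : ℂ) * (w : ℂ) ∧
        (act z (w, u)).2 = z ^ μ * u) ∧
      Nonempty (Quot (fun p q => ∃ z : Circle, act z p = q) ≃ₜ
        (Metric.closedBall (0:ℂ) 1)) :=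
  stmt10_general μ ν hνμ hco
end
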